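/- Let R be a commutative ring and q ∈ R. For pairs x = (n,m), y = (l,k) of natural numbers, set c(x,y) := q^{m·l} - q^{n·k}. Then for all pairs x = (n,m), y = (l,k), z = (a,b) of natural numbers: c(x,y)·c(x+y, z) + c(y,z)·c(y+z, x) + c(z,x)·c(z+x, y) = 0, where addition of pairs is componentwise. -/

import Mathlib

/-- Structure constants of the positive half of the quantum torus algebra:
`c((n,m),(l,k)) = q^{m l} - q^{n k}`. -/
def qtStructureConstant {R : Type*} [CommRing R] (q : R) (x y : ℕ × ℕ) : R :=
  q ^ (x.2 * y.1) - q ^ (x.1 * y.2)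

/-!
The quantum torus is the twisted monoid algebra with `T_x T_y = ε(x,y) T_{x+y}`, where
`ε(x,y) = q^{x.2 * y.1}` is multiplicative in each argument, and `c(x,y) = ε(x,y) - ε(y,x)` is the
structure constant of its commutator bracket. For any bimultiplicative `ε` the Jacobi sum of these
constants expands into twelve products of three values of `ε`, which cancel in pairs.
-/

section Bimultiplicative

variable {M R : Type*} [Add M] [CommRing R] (ε : M → M → R)

theorem jacobi_sub_swap_of_bimultiplicative
    (hleft : ∀ x y z, ε (x + y) z = ε x z * ε y z)
    (hright : ∀ x y z, ε x (y + z) = ε x y * ε x z) (x y z : M) :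
    (ε x y - ε y x) * (ε (x + y) z - ε z (x + y)) +
      (ε y z - ε z y) * (ε (y + z) x - ε x (y + z)) +
      (ε z x - ε x z) * (ε (z + x) y - ε y (z + x)) = 0 := by
  simp only [hleft, hright]
  ring

end Bimultiplicative

def qtCocycle {R : Type*} [CommRing R] (q : R) (x y : ℕ × ℕ) : R :=
  q ^ (x.2 * y.1)

section QuantumTorus

variable {R : Type*} [CommRing R] (q : R)

theorem qtCocycle_add_left (x y z : ℕ × ℕ) :
    qtCocycle q (x + y) z = qtCocycle q x z * qtCocycle q y z := by
  simp only [qtCocycle, Prod.snd_add, add_mul, pow_add]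

theorem qtCocycle_add_right (x y z : ℕ × ℕ) :
    qtCocycle q x (y + z) = qtCocycle q x y * qtCocycle q x z := by
  simp only [qtCocycle, Prod.fst_add, mul_add, pow_add]

theorem qtStructureConstant_eq_qtCocycle_sub (x y : ℕ × ℕ) :
    qtStructureConstant q x y = qtCocycle q x y - qtCocycle q y x := by
  rw [qtStructureConstant, qtCocycle, qtCocycle, mul_comm y.2]

end QuantumTorus

/-- Jacobi identity for the structure constants of the quantum torus algebra:
`c(x,y) c(x+y,z) + c(y,z) c(y+z,x) + c(z,x) c(z+x,y) = 0`. -/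
theorem qtStructureConstant_jacobi {R : Type*} [CommRing R] (q : R) (x y z : ℕ × ℕ) :
    qtStructureConstant q x y * qtStructureConstant q (x + y) z +
      qtStructureConstant q y z * qtStructureConstant q (y + z) x +
      qtStructureConstant q z x * qtStructureConstant q (z + x) y = 0 := by
  simp only [qtStructureConstant_eq_qtCocycle_sub]
  exact jacobi_sub_swap_of_bimultiplicative (qtCocycle q)
    (qtCocycle_add_left q) (qtCocycle_add_right q) x y z
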